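/- arXiv:2512.13067 — 5 statements merged into one kernel-verified Lean document; each statement's English description precedes it below -/
import Mathlib

section
/- Let P be a π-stationary stochastic matrix, let M and B be the Metropolis–Hastings and Barker orbit kernels, and let Q be a π-stationary stochastic matrix with G·Q·G = Q and Q(x,y) > 0 for all x,y. Then the data-processing-type inequalities hold: D^π(P‖Q) ≥ D^π(PM‖Q), D^π(P‖Q) ≥ D^π(MP‖Q), D^π(P‖Q) ≥ D^π(PB‖Q), and D^π(P‖Q) ≥ D^π(BP‖Q). -/
open Matrix Finset

/-- Total mass of the orbit (block) `i` under `π`. -/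
noncomputable def orbMass {n k : ℕ} (π : Fin n → ℝ) (part : Fin n → Fin k) (i : Fin k) : ℝ :=
  ∑ z ∈ Finset.univ.filter (fun z => part z = i), π z

/-- Number of states in the orbit (block) `i`. -/
def orbCard {n k : ℕ} (part : Fin n → Fin k) (i : Fin k) : ℕ :=
  (Finset.univ.filter (fun z => part z = i)).card

/-- The Gibbs orbit kernel. -/
noncomputable def gibbsKer {n k : ℕ} (π : Fin n → ℝ) (part : Fin n → Fin k) :
    Matrix (Fin n) (Fin n) ℝ :=
  Matrix.of fun x y => if part y = part x then π y / orbMass π part (part x) else 0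

/-- The Metropolis–Hastings orbit kernel. -/
noncomputable def mhKer {n k : ℕ} (π : Fin n → ℝ) (part : Fin n → Fin k) :
    Matrix (Fin n) (Fin n) ℝ :=
  Matrix.of fun x y =>
    if x = y then
      1 - ∑ z ∈ Finset.univ.filter (fun z => z ≠ x ∧ part z = part x),
            min 1 (π z / π x) / ((orbCard part (part x) : ℝ) - 1)
    else if part y = part x then
      min 1 (π y / π x) / ((orbCard part (part x) : ℝ) - 1)
    else 0

/-- The Barker orbit kernel. -/
noncomputable def barkerKer {n k : ℕ} (π : Fin n → ℝ) (part : Fin n → Fin k) :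
    Matrix (Fin n) (Fin n) ℝ :=
  Matrix.of fun x y =>
    if x = y then
      1 - ∑ z ∈ Finset.univ.filter (fun z => z ≠ x ∧ part z = part x),
            (π z / (π x + π z)) / ((orbCard part (part x) : ℝ) - 1)
    else if part y = part x then
      (π y / (π x + π y)) / ((orbCard part (part x) : ℝ) - 1)
    else 0

/-- The `μ`-weighted KL divergence between two kernels. -/
noncomputable def klDiv {m : ℕ} (μ : Fin m → ℝ) (P Q : Matrix (Fin m) (Fin m) ℝ) : ℝ :=
  ∑ x, ∑ y, μ x * P x y * Real.log (P x y / Q x y)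

noncomputable def tKer {n k : ℕ} (part : Fin n → Fin k) (w : Fin n → Fin n → ℝ) :
    Matrix (Fin n) (Fin n) ℝ :=
  Matrix.of fun x y =>
    if x = y then
      1 - ∑ z ∈ Finset.univ.filter (fun z => z ≠ x ∧ part z = part x),
            w x z / ((orbCard part (part x) : ℝ) - 1)
    else if part y = part x then w x y / ((orbCard part (part x) : ℝ) - 1)
    else 0

section tKerLemmas

variable {n k : ℕ} (π : Fin n → ℝ) (part : Fin n → Fin k) (w : Fin n → Fin n → ℝ)

lemma orbCard_pos (x : Fin n) : 0 < orbCard part (part x) :=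
  Finset.card_pos.mpr ⟨x, by simp⟩

lemma orbMass_pos (hπ : ∀ x, 0 < π x) (x : Fin n) : 0 < orbMass π part (part x) :=
  Finset.sum_pos (fun z _ => hπ z) ⟨x, by simp⟩

lemma filterF_eq (x : Fin n) :
    Finset.univ.filter (fun z => z ≠ x ∧ part z = part x)
      = (Finset.univ.filter (fun z => part z = part x)).erase x := by
  ext z; simp [Finset.mem_erase]

lemma cardF (x : Fin n) :
    (Finset.univ.filter (fun z => z ≠ x ∧ part z = part x)).card
      = orbCard part (part x) - 1 := by
  rw [filterF_eq, Finset.card_erase_of_mem (by simp)]; rfl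

lemma tKer_nonneg (hw0 : ∀ x y, 0 ≤ w x y) (hw1 : ∀ x y, w x y ≤ 1) (x y : Fin n) :
    0 ≤ tKer part w x y := by
  have hc1 : (1:ℝ) ≤ (orbCard part (part x) : ℝ) := by
    exact_mod_cast orbCard_pos part x
  unfold tKer
  simp only [Matrix.of_apply]
  split_ifs with h1 h2
  · have hS : ∑ z ∈ Finset.univ.filter (fun z => z ≠ x ∧ part z = part x),
        w x z / ((orbCard part (part x) : ℝ) - 1) ≤ 1 := by
      rcases Nat.lt_or_ge (orbCard part (part x)) 2 with hc | hc
      · have h1' : orbCard part (part x) = 1 :=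
          le_antisymm (by omega) (orbCard_pos part x)
        have he : (Finset.univ.filter (fun z => z ≠ x ∧ part z = part x)) = ∅ := by
          rw [← Finset.card_eq_zero, cardF, h1']
        rw [he]; simp
      · have hcpos : (0:ℝ) < (orbCard part (part x) : ℝ) - 1 := by
          have : (2:ℝ) ≤ (orbCard part (part x) : ℝ) := by exact_mod_cast hc
          linarith
        calc ∑ z ∈ Finset.univ.filter (fun z => z ≠ x ∧ part z = part x),
              w x z / ((orbCard part (part x) : ℝ) - 1)
            ≤ ∑ _z ∈ Finset.univ.filter (fun z => z ≠ x ∧ part z = part x),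
              1 / ((orbCard part (part x) : ℝ) - 1) := by
              apply Finset.sum_le_sum; intro z _; gcongr; exact hw1 x z
          _ = 1 := by
              rw [Finset.sum_const, cardF, nsmul_eq_mul]
              have : ((orbCard part (part x) - 1 : ℕ) : ℝ)
                  = (orbCard part (part x) : ℝ) - 1 := by
                rw [Nat.cast_sub (orbCard_pos part x)]; simp
              rw [this, mul_one_div, div_self hcpos.ne']
    linarith
  · exact div_nonneg (hw0 x y) (by linarith)
  · exact le_refl 0

lemma tKer_row (x : Fin n) : ∑ y, tKer part w x y = 1 := by
  have hsplit := Finset.add_sum_erase Finset.univ (fun y => tKer part w x y) (Finset.mem_univ x)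
  rw [← hsplit]
  have hset : (Finset.univ.filter (fun z => part z = part x)).erase x
      = (Finset.univ.erase x).filter (fun z => part z = part x) := by
    ext z; simp [Finset.mem_erase, and_comm]
  have h2 : ∑ y ∈ Finset.univ.erase x, tKer part w x y
      = ∑ z ∈ Finset.univ.filter (fun z => z ≠ x ∧ part z = part x),
          w x z / ((orbCard part (part x) : ℝ) - 1) := by
    rw [filterF_eq, hset, Finset.sum_filter]
    refine Finset.sum_congr rfl fun y hy => ?_
    have hyx : y ≠ x := (Finset.mem_erase.mp hy).1
    unfold tKer; simp only [Matrix.of_apply]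
    rw [if_neg (fun h => hyx h.symm)]
  have hd : tKer part w x x
      = 1 - ∑ z ∈ Finset.univ.filter (fun z => z ≠ x ∧ part z = part x),
          w x z / ((orbCard part (part x) : ℝ) - 1) := by
    show (if x = x then _ else _) = _
    rw [if_pos rfl]
  show tKer part w x x + ∑ y ∈ Finset.univ.erase x, tKer part w x y = 1
  rw [h2, hd]; ring

lemma tKer_orb (x y : Fin n) (h : part y ≠ part x) : tKer part w x y = 0 := by
  unfold tKer; simp only [Matrix.of_apply]
  rw [if_neg, if_neg h]
  rintro rfl; exact h rfl

lemma tKer_rev (hrev : ∀ x y, π x * w x y = π y * w y x) (x y : Fin n) :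
    π x * tKer part w x y = π y * tKer part w y x := by
  rcases eq_or_ne x y with rfl | hxy
  · rfl
  by_cases hp : part y = part x
  · unfold tKer; simp only [Matrix.of_apply]
    rw [if_neg hxy, if_pos hp, if_neg (Ne.symm hxy), if_pos hp.symm, hp,
      ← mul_div_assoc, ← mul_div_assoc, hrev x y]
  · rw [tKer_orb part w x y hp, tKer_orb part w y x (fun h => hp h.symm), mul_zero, mul_zero]

lemma tKer_stat (hrev : ∀ x y, π x * w x y = π y * w y x) (y : Fin n) :
    ∑ x, π x * tKer part w x y = π y := by
  have h : ∀ x, π x * tKer part w x y = π y * tKer part w y x :=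
    fun x => tKer_rev π part w hrev x y
  simp_rw [h]
  rw [← Finset.mul_sum, tKer_row, mul_one]

lemma gibbs_row (hπ : ∀ x, 0 < π x) (x : Fin n) : ∑ y, gibbsKer π part x y = 1 := by
  unfold gibbsKer
  simp only [Matrix.of_apply]
  rw [← Finset.sum_filter, ← Finset.sum_div]
  exact div_self (orbMass_pos π part hπ x).ne'

lemma gibbs_mul_ker (hπ : ∀ x, 0 < π x) (K : Matrix (Fin n) (Fin n) ℝ)
    (horb : ∀ x y, part y ≠ part x → K x y = 0)
    (hstat : ∀ y, ∑ x, π x * K x y = π y) :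
    gibbsKer π part * K = gibbsKer π part := by
  ext x y
  rw [Matrix.mul_apply]
  have h1 : ∀ z, gibbsKer π part x z * K z y
      = (if part z = part x then (π z * K z y) / orbMass π part (part x) else 0) := by
    intro z; unfold gibbsKer; simp only [Matrix.of_apply]
    split_ifs with h
    · ring
    · exact zero_mul _
  simp_rw [h1]
  rw [← Finset.sum_filter, ← Finset.sum_div]
  by_cases hy : part y = part x
  · have hext : ∑ z ∈ Finset.univ.filter (fun z => part z = part x), π z * K z y
        = ∑ z, π z * K z y := by
      apply Finset.sum_subset (Finset.filter_subset _ _)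
      intro z _ hz
      have hz' : part z ≠ part x := by simpa using hz
      rw [horb z y (fun h => hz' (h ▸ hy)), mul_zero]
    rw [hext, hstat]
    unfold gibbsKer; simp only [Matrix.of_apply]; rw [if_pos hy]
  · have hz : ∀ z ∈ Finset.univ.filter (fun z => part z = part x), π z * K z y = 0 := by
      intro z hzm
      have hz' : part z = part x := by simpa using hzm
      rw [horb z y (by rw [hz']; exact hy), mul_zero]
    rw [Finset.sum_eq_zero hz, zero_div]
    unfold gibbsKer; simp only [Matrix.of_apply]; rw [if_neg hy]

lemma ker_mul_gibbs (K : Matrix (Fin n) (Fin n) ℝ)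
    (horb : ∀ x y, part y ≠ part x → K x y = 0)
    (hrow : ∀ x, ∑ y, K x y = 1) :
    K * gibbsKer π part = gibbsKer π part := by
  ext x y
  rw [Matrix.mul_apply]
  have h1 : ∀ z, K x z * gibbsKer π part z y = K x z * gibbsKer π part x y := by
    intro z
    by_cases h : part z = part x
    · congr 1
      unfold gibbsKer; simp only [Matrix.of_apply]; rw [h]
    · rw [horb x z h, zero_mul, zero_mul]
  rw [Finset.sum_congr rfl (fun z _ => h1 z), ← Finset.sum_mul, hrow, one_mul]

end tKerLemmas

lemma log_sum_ineq {ι : Type*} (s : Finset ι) (a b : ι → ℝ)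
    (ha : ∀ i ∈ s, 0 ≤ a i) (hb : ∀ i ∈ s, 0 ≤ b i)
    (h0 : ∀ i ∈ s, b i = 0 → a i = 0) :
    (∑ i ∈ s, a i) * Real.log ((∑ i ∈ s, a i) / (∑ i ∈ s, b i)) ≤
      ∑ i ∈ s, a i * Real.log (a i / b i) := by
  rcases (Finset.sum_nonneg ha).eq_or_lt with hA0 | hA0
  · have hz : ∀ i ∈ s, a i = 0 := (Finset.sum_eq_zero_iff_of_nonneg ha).mp hA0.symm
    rw [← hA0, zero_mul]
    refine le_of_eq (Finset.sum_eq_zero fun i hi => ?_).symm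
    rw [hz i hi, zero_mul]
  · have hB0 : 0 < ∑ i ∈ s, b i := by
      rcases (Finset.sum_nonneg hb).eq_or_lt with h | h
      · exfalso
        have hbz : ∀ i ∈ s, b i = 0 := (Finset.sum_eq_zero_iff_of_nonneg hb).mp h.symm
        have haz : (∑ i ∈ s, a i) = 0 :=
          Finset.sum_eq_zero fun i hi => h0 i hi (hbz i hi)
        linarith
      · exact h
    set A := ∑ i ∈ s, a i with hA
    set B := ∑ i ∈ s, b i with hB
    have key : ∀ i ∈ s, a i * Real.log (A / B) + (a i - A / B * b i)
        ≤ a i * Real.log (a i / b i) := by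
      intro i hi
      rcases (ha i hi).eq_or_lt with haz | hap
      · rw [← haz]
        have : 0 ≤ A / B * b i := mul_nonneg (div_nonneg hA0.le hB0.le) (hb i hi)
        simp only [zero_mul, zero_sub, zero_add]
        linarith
      · have hbp : 0 < b i :=
          lt_of_le_of_ne (hb i hi) (fun h => by
            have := h0 i hi h.symm; linarith)
        have hlog : Real.log (b i * A / (a i * B)) ≤ b i * A / (a i * B) - 1 :=
          Real.log_le_sub_one_of_pos (by positivity)
        have heq : Real.log (b i * A / (a i * B)) = Real.log (A / B) - Real.log (a i / b i) := by
          rw [Real.log_div (by positivity) (by positivity),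
              Real.log_div hA0.ne' hB0.ne', Real.log_div hap.ne' hbp.ne',
              Real.log_mul hbp.ne' hA0.ne', Real.log_mul hap.ne' hB0.ne']
          ring
        have h3 : Real.log (A / B) - Real.log (a i / b i) ≤ b i * A / (a i * B) - 1 :=
          heq ▸ hlog
        have h4 : a i * (b i * A / (a i * B)) = A / B * b i := by
          field_simp
        nlinarith [mul_le_mul_of_nonneg_left h3 hap.le]
    calc A * Real.log (A / B)
        = ∑ i ∈ s, (a i * Real.log (A / B) + (a i - A / B * b i)) := by
          rw [Finset.sum_add_distrib, ← Finset.sum_mul, Finset.sum_sub_distrib,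
            ← Finset.mul_sum, ← hA, ← hB, div_mul_cancel₀ A hB0.ne']
          ring
      _ ≤ _ := Finset.sum_le_sum key

lemma kl_right {m : ℕ} (μ : Fin m → ℝ) (hμ : ∀ x, 0 ≤ μ x)
    (P K Q : Matrix (Fin m) (Fin m) ℝ)
    (hP : ∀ x y, 0 ≤ P x y) (hK : ∀ x y, 0 ≤ K x y) (hKrow : ∀ z, ∑ y, K z y = 1)
    (hQpos : ∀ x y, 0 < Q x y) (hQK : Q * K = Q) :
    klDiv μ (P * K) Q ≤ klDiv μ P Q := by
  unfold klDiv
  have key : ∀ x y, μ x * (P * K) x y * Real.log ((P * K) x y / Q x y)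
      ≤ ∑ z, μ x * (P x z * K z y) * Real.log (P x z / Q x z) := by
    intro x y
    have hQ : Q x y = ∑ z, Q x z * K z y := by
      conv_lhs => rw [← hQK, Matrix.mul_apply]
    have hls := log_sum_ineq Finset.univ (fun z => P x z * K z y) (fun z => Q x z * K z y)
      (fun z _ => mul_nonneg (hP x z) (hK z y))
      (fun z _ => mul_nonneg (hQpos x z).le (hK z y))
      (fun z _ hbz => by
        have : K z y = 0 := by
          rcases mul_eq_zero.mp hbz with h | h
          · exact absurd h (hQpos x z).ne'
          · exact h
        show P x z * K z y = 0
        rw [this, mul_zero])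
    have hrhs : ∑ z, (P x z * K z y) * Real.log ((P x z * K z y) / (Q x z * K z y))
        = ∑ z, (P x z * K z y) * Real.log (P x z / Q x z) := by
      refine Finset.sum_congr rfl fun z _ => ?_
      rcases eq_or_ne (K z y) 0 with h | h
      · rw [h, mul_zero, zero_mul, zero_mul]
      · rw [mul_div_mul_right _ _ h]
    rw [hrhs] at hls
    have hA : (P * K) x y = ∑ z, P x z * K z y := Matrix.mul_apply
    rw [hA, hQ]
    calc μ x * (∑ z, P x z * K z y) *
          Real.log ((∑ z, P x z * K z y) / (∑ z, Q x z * K z y))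
        ≤ μ x * ∑ z, (P x z * K z y) * Real.log (P x z / Q x z) := by
          rw [mul_assoc]
          exact mul_le_mul_of_nonneg_left hls (hμ x)
      _ = ∑ z, μ x * (P x z * K z y) * Real.log (P x z / Q x z) := by
          rw [Finset.mul_sum]; exact Finset.sum_congr rfl fun z _ => by ring
  calc ∑ x, ∑ y, μ x * (P * K) x y * Real.log ((P * K) x y / Q x y)
      ≤ ∑ x, ∑ y, ∑ z, μ x * (P x z * K z y) * Real.log (P x z / Q x z) :=
        Finset.sum_le_sum fun x _ => Finset.sum_le_sum fun y _ => key x y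
    _ = ∑ x, ∑ z, μ x * P x z * Real.log (P x z / Q x z) := by
        refine Finset.sum_congr rfl fun x _ => ?_
        rw [Finset.sum_comm]
        refine Finset.sum_congr rfl fun z _ => ?_
        have : ∀ y, μ x * (P x z * K z y) * Real.log (P x z / Q x z)
            = (μ x * P x z * Real.log (P x z / Q x z)) * K z y := fun y => by ring
        simp_rw [this]
        rw [← Finset.mul_sum, hKrow, mul_one]

lemma kl_left {m : ℕ} (μ : Fin m → ℝ) (hμ : ∀ x, 0 ≤ μ x)
    (P K Q : Matrix (Fin m) (Fin m) ℝ)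
    (hP : ∀ x y, 0 ≤ P x y) (hK : ∀ x y, 0 ≤ K x y)
    (hKstat : ∀ z, ∑ x, μ x * K x z = μ z)
    (hQpos : ∀ x y, 0 < Q x y) (hKQ : K * Q = Q) :
    klDiv μ (K * P) Q ≤ klDiv μ P Q := by
  unfold klDiv
  have key : ∀ x y, μ x * (K * P) x y * Real.log ((K * P) x y / Q x y)
      ≤ ∑ z, μ x * (K x z * P z y) * Real.log (P z y / Q z y) := by
    intro x y
    have hQ : Q x y = ∑ z, K x z * Q z y := by
      conv_lhs => rw [← hKQ, Matrix.mul_apply]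
    have hls := log_sum_ineq Finset.univ (fun z => K x z * P z y) (fun z => K x z * Q z y)
      (fun z _ => mul_nonneg (hK x z) (hP z y))
      (fun z _ => mul_nonneg (hK x z) (hQpos z y).le)
      (fun z _ hbz => by
        have : K x z = 0 := by
          rcases mul_eq_zero.mp hbz with h | h
          · exact h
          · exact absurd h (hQpos z y).ne'
        show K x z * P z y = 0
        rw [this, zero_mul])
    have hrhs : ∑ z, (K x z * P z y) * Real.log ((K x z * P z y) / (K x z * Q z y))
        = ∑ z, (K x z * P z y) * Real.log (P z y / Q z y) := by
      refine Finset.sum_congr rfl fun z _ => ?_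
      rcases eq_or_ne (K x z) 0 with h | h
      · rw [h, zero_mul, zero_mul, zero_mul]
      · rw [mul_div_mul_left _ _ h]
    rw [hrhs] at hls
    have hA : (K * P) x y = ∑ z, K x z * P z y := Matrix.mul_apply
    rw [hA, hQ]
    calc μ x * (∑ z, K x z * P z y) *
          Real.log ((∑ z, K x z * P z y) / (∑ z, K x z * Q z y))
        ≤ μ x * ∑ z, (K x z * P z y) * Real.log (P z y / Q z y) := by
          rw [mul_assoc]
          exact mul_le_mul_of_nonneg_left hls (hμ x)
      _ = ∑ z, μ x * (K x z * P z y) * Real.log (P z y / Q z y) := by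
          rw [Finset.mul_sum]; exact Finset.sum_congr rfl fun z _ => by ring
  calc ∑ x, ∑ y, μ x * (K * P) x y * Real.log ((K * P) x y / Q x y)
      ≤ ∑ x, ∑ y, ∑ z, μ x * (K x z * P z y) * Real.log (P z y / Q z y) :=
        Finset.sum_le_sum fun x _ => Finset.sum_le_sum fun y _ => key x y
    _ = ∑ x, ∑ y, μ x * P x y * Real.log (P x y / Q x y) := by
        rw [Finset.sum_comm]
        conv_rhs => rw [Finset.sum_comm]
        refine Finset.sum_congr rfl fun y _ => ?_
        rw [Finset.sum_comm]
        refine Finset.sum_congr rfl fun z _ => ?_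
        have h1 : ∀ x, μ x * (K x z * P z y) * Real.log (P z y / Q z y)
            = (μ x * K x z) * (P z y * Real.log (P z y / Q z y)) := fun x => by ring
        simp_rw [h1]
        rw [← Finset.sum_mul, hKstat, ← mul_assoc]

/-- data-processing-type inequalities for the MH and Barker orbit
kernels: `D^π(P‖Q) ≥ D^π(PM‖Q), D^π(MP‖Q), D^π(PB‖Q), D^π(BP‖Q)`. -/
theorem stmt12 {n k : ℕ} (hn : 0 < n)
    (π : Fin n → ℝ) (hπpos : ∀ x, 0 < π x) (hπsum : ∑ x, π x = 1)
    (part : Fin n → Fin k) (hpart : Function.Surjective part)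
    (P : Matrix (Fin n) (Fin n) ℝ)
    (hPnonneg : ∀ x y, 0 ≤ P x y) (hProw : ∀ x, ∑ y, P x y = 1)
    (hPstat : ∀ y, ∑ x, π x * P x y = π y)
    (Q : Matrix (Fin n) (Fin n) ℝ)
    (hQnonneg : ∀ x y, 0 ≤ Q x y) (hQrow : ∀ x, ∑ y, Q x y = 1)
    (hQstat : ∀ y, ∑ x, π x * Q x y = π y)
    (hQinv : gibbsKer π part * Q * gibbsKer π part = Q)
    (hQpos : ∀ x y, 0 < Q x y) :
    klDiv π (P * mhKer π part) Q ≤ klDiv π P Q ∧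
    klDiv π (mhKer π part * P) Q ≤ klDiv π P Q ∧
    klDiv π (P * barkerKer π part) Q ≤ klDiv π P Q ∧
    klDiv π (barkerKer π part * P) Q ≤ klDiv π P Q := by
  have hπnn : ∀ x, 0 ≤ π x := fun x => (hπpos x).le
  -- MH weight
  set wM : Fin n → Fin n → ℝ := fun x z => min 1 (π z / π x) with hwM
  have hwM0 : ∀ x y, 0 ≤ wM x y := fun x y =>
    le_min zero_le_one (div_nonneg (hπnn y) (hπnn x))
  have hwM1 : ∀ x y, wM x y ≤ 1 := fun x y => min_le_left _ _
  have hwMrev : ∀ x y, π x * wM x y = π y * wM y x := by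
    intro x y
    have h : ∀ a b : Fin n, π a * wM a b = min (π a) (π b) := by
      intro a b
      show π a * min 1 (π b / π a) = _
      rw [← div_self (hπpos a).ne', min_div_div_right (hπnn a), mul_comm,
        div_mul_cancel₀ _ (hπpos a).ne']
    rw [h x y, h y x, min_comm]
  -- Barker weight
  set wB : Fin n → Fin n → ℝ := fun x z => π z / (π x + π z) with hwB
  have hwB0 : ∀ x y, 0 ≤ wB x y := fun x y =>
    div_nonneg (hπnn y) (by have := hπpos x; have := hπpos y; positivity)
  have hwB1 : ∀ x y, wB x y ≤ 1 := fun x y => by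
    have hx := hπpos x
    have hy := hπpos y
    rw [div_le_one (by positivity)]
    linarith
  have hwBrev : ∀ x y, π x * wB x y = π y * wB y x := by
    intro x y
    show π x * (π y / (π x + π y)) = π y * (π x / (π y + π x))
    rw [add_comm (π y)]
    ring
  have hM : mhKer π part = tKer part wM := rfl
  have hB : barkerKer π part = tKer part wB := rfl
  -- generic derivation of the four inequalities for a weight kernel
  have main : ∀ w : Fin n → Fin n → ℝ, (∀ x y, 0 ≤ w x y) → (∀ x y, w x y ≤ 1) →
      (∀ x y, π x * w x y = π y * w y x) →
      klDiv π (P * tKer part w) Q ≤ klDiv π P Q ∧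
      klDiv π (tKer part w * P) Q ≤ klDiv π P Q := by
    intro w hw0 hw1 hwrev
    have hKnn := tKer_nonneg part w hw0 hw1
    have hKrow := tKer_row part w
    have hKorb := tKer_orb part w
    have hKstat := tKer_stat π part w hwrev
    have hGK : gibbsKer π part * tKer part w = gibbsKer π part :=
      gibbs_mul_ker π part hπpos _ hKorb hKstat
    have hKG : tKer part w * gibbsKer π part = gibbsKer π part :=
      ker_mul_gibbs π part _ hKorb hKrow
    have hQK : Q * tKer part w = Q := by
      calc Q * tKer part w = gibbsKer π part * Q * gibbsKer π part * tKer part w := by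
            rw [hQinv]
        _ = gibbsKer π part * Q * (gibbsKer π part * tKer part w) := by
            rw [Matrix.mul_assoc]
        _ = Q := by rw [hGK, hQinv]
    have hKQ : tKer part w * Q = Q := by
      calc tKer part w * Q = tKer part w * (gibbsKer π part * Q * gibbsKer π part) := by
            rw [hQinv]
        _ = tKer part w * gibbsKer π part * Q * gibbsKer π part := by
            rw [← Matrix.mul_assoc, ← Matrix.mul_assoc]
        _ = Q := by rw [hKG, hQinv]
    exact ⟨kl_right π hπnn P _ Q hPnonneg hKnn hKrow hQpos hQK,
      kl_left π hπnn P _ Q hPnonneg hKnn hKstat hQpos hKQ⟩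
  obtain ⟨hM1, hM2⟩ := main wM hwM0 hwM1 hwMrev
  obtain ⟨hB1, hB2⟩ := main wB hwB0 hwB1 hwBrev
  rw [hM, hB]
  exact ⟨hM1, hM2, hB1, hB2⟩
end

section
/- Assume k < n. Let P̃ be a k×k stochastic matrix that is stationary and reversible with respect to π̄ (π̄(i) := π(O_i)), and define the n×n matrix Q by Q(x,y) := P̃(i,j)·π(y)/π(O_j) for x ∈ O_i and y ∈ O_j. Then the spectrum (set of eigenvalues over ℝ) of the matrix G·Q·G equals spectrum(P̃) ∪ {0}. -/
/-!
Let `L = orbLift part` be the `n × k` orbit-indicator matrix and `R = orbAvg π part` the `k × n`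
matrix of `π`-weighted averages over orbits. Then `G = L R`, `Q = L P̃ R` and `R L = 1`, so
`G Q G = Q = L P̃ R`. An eigenvector `v` of `L P̃ R` with eigenvalue `μ ≠ 0` gives the eigenvector
`R v` of `P̃ = R (L P̃ R) L`, and conversely `w ↦ L w`; the eigenvalue `0` comes from the kernel
of `R`, nontrivial since `k < n`.
-/

open Matrix Finset

namespace Matrix

variable {K m ι : Type*} [Field K] [Fintype m] [DecidableEq m] [Fintype ι]

theorem mem_spectrum_iff_exists_mulVec_eq_smul {M : Matrix m m K} {μ : K} :
    μ ∈ spectrum K M ↔ ∃ v ≠ 0, M *ᵥ v = μ • v := by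
  rw [← spectrum_toLin', ← Module.End.hasEigenvalue_iff_mem_spectrum,
    Module.End.hasEigenvalue_iff, Submodule.ne_bot_iff]
  simp only [Module.End.mem_eigenspace_iff, toLin'_apply]
  exact ⟨fun ⟨v, hv, h0⟩ => ⟨v, h0, hv⟩, fun ⟨v, h0, hv⟩ => ⟨v, hv, h0⟩⟩

theorem zero_mem_spectrum_mul_of_card_lt (N : Matrix m ι K) (B : Matrix ι m K)
    (hcard : Fintype.card ι < Fintype.card m) : 0 ∈ spectrum K (N * B) := by
  have hker : LinearMap.ker B.toLin' ≠ ⊥ :=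
    LinearMap.ker_ne_bot_of_finrank_lt (by simpa using hcard)
  obtain ⟨v, hBv, hv⟩ := Submodule.ne_bot_iff _ |>.mp hker
  rw [LinearMap.mem_ker, toLin'_apply] at hBv
  exact mem_spectrum_iff_exists_mulVec_eq_smul.mpr
    ⟨v, hv, by rw [← mulVec_mulVec, hBv, mulVec_zero, zero_smul]⟩

variable [DecidableEq ι] {A : Matrix m ι K} {B : Matrix ι m K}

theorem mem_spectrum_mul_mul_of_mul_eq_one (hBA : B * A = 1) {M : Matrix ι ι K} {μ : K}
    (hμ : μ ∈ spectrum K M) : μ ∈ spectrum K (A * M * B) := by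
  obtain ⟨w, hw, hMw⟩ := mem_spectrum_iff_exists_mulVec_eq_smul.mp hμ
  have hBAw : B *ᵥ (A *ᵥ w) = w := by rw [mulVec_mulVec, hBA, one_mulVec]
  refine mem_spectrum_iff_exists_mulVec_eq_smul.mpr ⟨A *ᵥ w, fun h => hw ?_, ?_⟩
  · rw [← hBAw, h, mulVec_zero]
  · rw [← mulVec_mulVec, hBAw, ← mulVec_mulVec, hMw, mulVec_smul]

theorem mem_spectrum_of_mem_spectrum_mul_mul (hBA : B * A = 1) {M : Matrix ι ι K} {μ : K}
    (hμ0 : μ ≠ 0) (hμ : μ ∈ spectrum K (A * M * B)) : μ ∈ spectrum K M := by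
  obtain ⟨v, hv, hAMBv⟩ := mem_spectrum_iff_exists_mulVec_eq_smul.mp hμ
  rw [← mulVec_mulVec, ← mulVec_mulVec] at hAMBv
  refine mem_spectrum_iff_exists_mulVec_eq_smul.mpr ⟨B *ᵥ v, fun h => hv ?_, ?_⟩
  · rw [h, mulVec_zero, mulVec_zero] at hAMBv
    exact (smul_eq_zero.mp hAMBv.symm).resolve_left hμ0
  · rw [← one_mulVec (M *ᵥ _), ← hBA, ← mulVec_mulVec, hAMBv, mulVec_smul]

theorem spectrum_mul_mul_of_mul_eq_one (hBA : B * A = 1)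
    (hcard : Fintype.card ι < Fintype.card m) (M : Matrix ι ι K) :
    spectrum K (A * M * B) = spectrum K M ∪ {0} := by
  ext μ
  rw [Set.mem_union, Set.mem_singleton_iff]
  refine ⟨fun hμ => or_iff_not_imp_right.mpr fun hμ0 =>
      mem_spectrum_of_mem_spectrum_mul_mul hBA hμ0 hμ, ?_⟩
  rintro (hμ | rfl)
  · exact mem_spectrum_mul_mul_of_mul_eq_one hBA hμ
  · exact zero_mem_spectrum_mul_of_card_lt _ B hcard

end Matrix

section Orbits

variable {n k : ℕ} (π : Fin n → ℝ) (part : Fin n → Fin k)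

def orbLift : Matrix (Fin n) (Fin k) ℝ :=
  of fun x i => if part x = i then 1 else 0

noncomputable def orbAvg : Matrix (Fin k) (Fin n) ℝ :=
  of fun i y => if part y = i then π y / orbMass π part i else 0

variable {π part}

theorem orbMass_pos_s13 (hπpos : ∀ x, 0 < π x) (hpart : Function.Surjective part) (i : Fin k) :
    0 < orbMass π part i := by
  obtain ⟨x, rfl⟩ := hpart i
  exact Finset.sum_pos' (fun z _ => (hπpos z).le) ⟨x, by simp, hπpos x⟩

theorem orbLift_mul_apply {α : Type*} (N : Matrix (Fin k) α ℝ) (x : Fin n) (a : α) :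
    (orbLift part * N) x a = N (part x) a := by
  simp [orbLift, mul_apply]

theorem mul_orbLift_apply {α : Type*} [Fintype α] (N : Matrix α (Fin n) ℝ) (a : α) (j : Fin k) :
    (N * orbLift part) a j = ∑ y ∈ univ.filter (fun y => part y = j), N a y := by
  simp [orbLift, mul_apply, Finset.sum_filter]

theorem mul_orbAvg_apply {α : Type*} (N : Matrix α (Fin k) ℝ) (a : α) (y : Fin n) :
    (N * orbAvg π part) a y = N a (part y) * (π y / orbMass π part (part y)) := by
  simp [orbAvg, mul_apply]

theorem orbAvg_mul_orbLift (hm : ∀ i, orbMass π part i ≠ 0) :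
    orbAvg π part * orbLift part = 1 := by
  ext i j
  simp only [mul_orbLift_apply, orbAvg, of_apply]
  by_cases hij : i = j
  · subst hij
    rw [one_apply_eq, Finset.sum_congr rfl fun y hy => if_pos (Finset.mem_filter.mp hy).2,
      ← Finset.sum_div]
    exact div_self (hm i)
  · rw [one_apply_ne hij]
    exact Finset.sum_eq_zero fun y hy =>
      if_neg fun hyi => hij (hyi.symm.trans (Finset.mem_filter.mp hy).2)

theorem gibbsKer_eq_orbLift_mul_orbAvg : gibbsKer π part = orbLift part * orbAvg π part := by
  ext x y
  rw [orbLift_mul_apply]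
  rfl

end Orbits

theorem stmt13_general {n k : ℕ} (hkn : k < n)
    (π : Fin n → ℝ) (hπpos : ∀ x, 0 < π x)
    (part : Fin n → Fin k) (hpart : Function.Surjective part)
    (Pt : Matrix (Fin k) (Fin k) ℝ)
    (Q : Matrix (Fin n) (Fin n) ℝ)
    (hQ : ∀ x y : Fin n, Q x y = Pt (part x) (part y) * (π y / orbMass π part (part y))) :
    spectrum ℝ (gibbsKer π part * Q * gibbsKer π part) = spectrum ℝ Pt ∪ {0} := by
  have hRL : orbAvg π part * orbLift part = 1 :=
    orbAvg_mul_orbLift fun i => (orbMass_pos_s13 hπpos hpart i).ne'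
  have hRL' (X : Matrix (Fin k) (Fin n) ℝ) : orbAvg π part * (orbLift part * X) = X := by
    rw [← Matrix.mul_assoc, hRL, Matrix.one_mul]
  obtain rfl : Q = orbLift part * Pt * orbAvg π part := by
    ext x y
    rw [hQ, mul_orbAvg_apply, orbLift_mul_apply]
  have hGQG : gibbsKer π part * (orbLift part * Pt * orbAvg π part) * gibbsKer π part
      = orbLift part * Pt * orbAvg π part := by
    simp only [gibbsKer_eq_orbLift_mul_orbAvg, Matrix.mul_assoc, hRL']
  rw [hGQG]
  exact spectrum_mul_mul_of_mul_eq_one hRL (by simpa using hkn) Pt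

/-- lifting a `π̄`-stationary, `π̄`-reversible stochastic matrix `P̃` on
the orbit space to `Q` on the state space, `spec(GQG) = spec(P̃) ∪ {0}`. -/
theorem stmt13 {n k : ℕ} (hn : 0 < n) (hkn : k < n)
    (π : Fin n → ℝ) (hπpos : ∀ x, 0 < π x) (hπsum : ∑ x, π x = 1)
    (part : Fin n → Fin k) (hpart : Function.Surjective part)
    (Pt : Matrix (Fin k) (Fin k) ℝ)
    (hPtnonneg : ∀ i j, 0 ≤ Pt i j) (hPtrow : ∀ i, ∑ j, Pt i j = 1)
    (hPtstat : ∀ j, ∑ i, orbMass π part i * Pt i j = orbMass π part j)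
    (hPtrev : ∀ i j, orbMass π part i * Pt i j = orbMass π part j * Pt j i)
    (Q : Matrix (Fin n) (Fin n) ℝ)
    (hQ : ∀ x y : Fin n, Q x y = Pt (part x) (part y) * (π y / orbMass π part (part y))) :
    spectrum ℝ (gibbsKer π part * Q * gibbsKer π part) = spectrum ℝ Pt ∪ {0} :=
  stmt13_general hkn π hπpos part hpart Pt Q hQ
end

section
/- Let P be a π-reversible stochastic matrix and assume the orbit partition has k < n blocks. Then the spectrum (set of eigenvalues over ℝ) of GPG equals spectrum(P̄) ∪ {0}, where P̄ is the projection chain of P induced by the orbits. -/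
open Matrix Finset

/-- The projection chain of `P` induced by the orbits. -/
noncomputable def projChain {n k : ℕ} (π : Fin n → ℝ) (part : Fin n → Fin k)
    (P : Matrix (Fin n) (Fin n) ℝ) : Matrix (Fin k) (Fin k) ℝ :=
  Matrix.of fun i j =>
    (1 / orbMass π part i) *
      ∑ x ∈ Finset.univ.filter (fun x => part x = i),
        ∑ y ∈ Finset.univ.filter (fun y => part y = j), π x * P x y

lemma spec_iff {m : ℕ} (M : Matrix (Fin m) (Fin m) ℝ) (μ : ℝ) :
    μ ∈ spectrum ℝ M ↔ ∃ v ≠ 0, M.mulVec v = μ • v := by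
  rw [spectrum.mem_iff, Matrix.isUnit_iff_isUnit_det, isUnit_iff_ne_zero, not_not,
    ← Matrix.exists_mulVec_eq_zero_iff]
  have key : ∀ v, (algebraMap ℝ (Matrix (Fin m) (Fin m) ℝ) μ - M).mulVec v
      = μ • v - M.mulVec v := by
    intro v
    rw [Matrix.sub_mulVec, Algebra.algebraMap_eq_smul_one, Matrix.smul_mulVec,
      Matrix.one_mulVec]
  constructor
  · rintro ⟨v, hv, h⟩
    refine ⟨v, hv, ?_⟩; rw [key] at h; exact (sub_eq_zero.mp h).symm
  · rintro ⟨v, hv, h⟩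
    exact ⟨v, hv, by rw [key, h, sub_self]⟩

lemma specAB {n k : ℕ} (A : Matrix (Fin n) (Fin k) ℝ) (B : Matrix (Fin k) (Fin n) ℝ)
    (μ : ℝ) (hμ : μ ≠ 0) (h : μ ∈ spectrum ℝ (A * B)) : μ ∈ spectrum ℝ (B * A) := by
  rw [spec_iff] at h ⊢
  obtain ⟨v, hv, hAB⟩ := h
  refine ⟨B.mulVec v, ?_, ?_⟩
  · intro h0
    apply hv
    have : (A * B).mulVec v = 0 := by
      rw [← Matrix.mulVec_mulVec, h0, Matrix.mulVec_zero]
    rw [hAB] at this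
    simpa [hμ] using this
  · rw [← Matrix.mulVec_mulVec, Matrix.mulVec_mulVec (M := A), hAB, Matrix.mulVec_smul]


/-- for `π`-reversible stochastic `P` and `k < n` orbits,
`spec(GPG) = spec(P̄) ∪ {0}`. -/
theorem stmt14 {n k : ℕ} (hn : 0 < n) (hkn : k < n)
    (π : Fin n → ℝ) (hπpos : ∀ x, 0 < π x) (hπsum : ∑ x, π x = 1)
    (part : Fin n → Fin k) (hpart : Function.Surjective part)
    (P : Matrix (Fin n) (Fin n) ℝ)
    (hPnonneg : ∀ x y, 0 ≤ P x y) (hProw : ∀ x, ∑ y, P x y = 1)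
    (hPrev : ∀ x y, π x * P x y = π y * P y x) :
    spectrum ℝ (gibbsKer π part * P * gibbsKer π part)
      = spectrum ℝ (projChain π part P) ∪ {0} := by
  classical
  have hmass : ∀ i, 0 < orbMass π part i := by
    intro i
    obtain ⟨x, hx⟩ := hpart i
    refine Finset.sum_pos (fun z _ => hπpos z) ⟨x, by simp [hx]⟩
  set R : Matrix (Fin n) (Fin k) ℝ :=
    Matrix.of (fun x i => if part x = i then 1 else 0) with hR
  set L : Matrix (Fin k) (Fin n) ℝ :=
    Matrix.of (fun i y => if part y = i then π y / orbMass π part i else 0) with hL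
  have hG : gibbsKer π part = R * L := by
    ext x y
    simp only [gibbsKer, Matrix.mul_apply, hR, hL, Matrix.of_apply]
    rw [Finset.sum_eq_single (part x)]
    · simp
    · intro b _ hb
      simp [Ne.symm hb]
    · simp
  have hLR : L * R = 1 := by
    ext i j
    simp only [Matrix.mul_apply, hR, hL, Matrix.of_apply, Matrix.one_apply]
    by_cases hij : i = j
    · subst hij
      simp only [if_pos rfl]
      have : ∀ y : Fin n, (if part y = i then π y / orbMass π part i else 0) *
          (if part y = i then (1:ℝ) else 0)
          = if part y = i then π y / orbMass π part i else 0 := by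
        intro y; split_ifs <;> ring
      rw [Finset.sum_congr rfl (fun y _ => this y), ← Finset.sum_filter,
        ← Finset.sum_div]
      exact div_self (ne_of_gt (hmass i))
    · rw [if_neg hij]
      refine Finset.sum_eq_zero fun y _ => ?_
      by_cases h1 : part y = i
      · by_cases h2 : part y = j
        · exact absurd (h1.symm.trans h2) hij
        · rw [if_neg h2, mul_zero]
      · rw [if_neg h1, zero_mul]
  have hQ : L * P * R = projChain π part P := by
    ext i j
    simp only [projChain, Matrix.mul_apply, hR, hL, Matrix.of_apply]
    have lhs_eq : ∀ y : Fin n,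
        (∑ x, (if part x = i then π x / orbMass π part i else 0) * P x y) *
          (if part y = j then (1:ℝ) else 0)
        = if part y = j then
            ∑ x ∈ Finset.univ.filter (fun x => part x = i),
              π x / orbMass π part i * P x y else 0 := by
      intro y
      simp only [ite_mul, zero_mul, mul_ite, mul_one, mul_zero, ← Finset.sum_filter]
    rw [Finset.sum_congr rfl (fun y _ => lhs_eq y), ← Finset.sum_filter]
    simp only [Finset.mul_sum]
    rw [Finset.sum_comm]
    exact Finset.sum_congr rfl fun x _ => Finset.sum_congr rfl fun y _ => by ring
  set Q : Matrix (Fin k) (Fin k) ℝ := projChain π part P with hQdef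
  have hGPG : gibbsKer π part * P * gibbsKer π part = (R * Q) * L := by
    rw [hG, ← hQ]
    simp only [Matrix.mul_assoc]
  have hLRQ : L * (R * Q) = Q := by
    rw [← Matrix.mul_assoc, hLR, Matrix.one_mul]
  -- 0 is an eigenvalue of GPG
  have hninj : ¬ Function.Injective part := by
    intro h
    have := Fintype.card_le_of_injective part h
    simp only [Fintype.card_fin] at this
    omega
  rw [Function.not_injective_iff] at hninj
  obtain ⟨x₁, x₂, hpx, hne⟩ := hninj
  set v : Fin n → ℝ :=
    fun y => π x₂ * (if y = x₁ then 1 else 0) - π x₁ * (if y = x₂ then 1 else 0) with hvdef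
  have hv0 : v ≠ 0 := by
    intro h
    have h1 := congrFun h x₁
    simp [hvdef, hne] at h1
    exact (hπpos x₂).ne' h1
  have hGv : (gibbsKer π part).mulVec v = 0 := by
    funext x
    simp only [Matrix.mulVec, dotProduct, hvdef, gibbsKer, Matrix.of_apply, Pi.zero_apply]
    have : ∀ y : Fin n,
        (if part y = part x then π y / orbMass π part (part x) else 0) *
          (π x₂ * (if y = x₁ then 1 else 0) - π x₁ * (if y = x₂ then 1 else 0))
        = (if y = x₁ then (if part x₁ = part x then
              π x₁ / orbMass π part (part x) else 0) * π x₂ else 0)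
          - (if y = x₂ then (if part x₂ = part x then
              π x₂ / orbMass π part (part x) else 0) * π x₁ else 0) := by
      intro y
      by_cases h1 : y = x₁ <;> by_cases h2 : y = x₂
      · exact absurd (h1 ▸ h2 ▸ rfl : x₁ = x₂) hne
      · subst h1
        simp only [if_pos rfl, if_neg h2, mul_one, mul_zero, sub_zero]
        split_ifs <;> ring
      · subst h2
        simp only [if_pos rfl, if_neg h1, mul_one, mul_zero, zero_sub]
        split_ifs <;> ring
      · simp [h1, h2]
    rw [Finset.sum_congr rfl (fun y _ => this y), Finset.sum_sub_distrib]
    simp only [Finset.sum_ite_eq, Finset.sum_ite_eq', Finset.mem_univ, if_true, hpx]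
    split_ifs <;> ring
  have hGPGv : (gibbsKer π part * P * gibbsKer π part).mulVec v = 0 := by
    rw [← Matrix.mulVec_mulVec, hGv, Matrix.mulVec_zero]
  have h0 : (0:ℝ) ∈ spectrum ℝ (gibbsKer π part * P * gibbsKer π part) :=
    (spec_iff _ _).mpr ⟨v, hv0, by rw [hGPGv, zero_smul]⟩
  ext μ
  simp only [Set.mem_union, Set.mem_singleton_iff]
  constructor
  · intro h
    by_cases hμ : μ = 0
    · exact Or.inr hμ
    · left
      have := specAB (R * Q) L μ hμ (by rwa [← hGPG])
      rwa [hLRQ] at this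
  · rintro (h | h)
    · by_cases hμ : μ = 0
      · exact hμ ▸ h0
      · have := specAB L (R * Q) μ hμ (by rwa [hLRQ])
        rwa [← hGPG] at this
    · exact h ▸ h0
end

section
/- Suppose π(1) ≤ π(2) ≤ … ≤ π(n) and fix k ∈ {1,…,n}. Let O be the partition of X into the k blocks {1}, {2}, …, {k−1}, {k, k+1, …, n}, with Gibbs orbit kernel G_O. Then for every partition C of X into exactly k nonempty blocks, with Gibbs orbit kernel G_C, one has D^π(G_O‖Π) ≤ D^π(G_C‖Π). That is, G_O minimises the KL divergence to Π among all Gibbs orbit kernels arising from partitions with k blocks. -/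
open Matrix Finset

/-- Abel-summation style bound. -/
lemma abel_bound : ∀ (k : ℕ) (g d : ℕ → ℝ),
    (∀ i j, i ≤ j → j < k → g i ≤ g j) →
    (∀ j, j ≤ k → 0 ≤ ∑ i ∈ Finset.range j, d i) →
    ∀ G : ℝ, (∀ i, i < k → g i ≤ G) →
    ∑ i ∈ Finset.range k, g i * d i ≤ G * ∑ i ∈ Finset.range k, d i := by
  intro k
  induction k with
  | zero => intro g d _ _ G _; simp
  | succ k ih =>
    intro g d hg hd G hG
    rw [Finset.sum_range_succ, Finset.sum_range_succ]
    have h1 : ∑ i ∈ Finset.range k, g i * d i ≤ g k * ∑ i ∈ Finset.range k, d i :=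
      ih g d (fun i j hij hj => hg i j hij (by omega)) (fun j hj => hd j (by omega))
        (g k) (fun i hi => hg i k (by omega) (by omega))
    have hP : 0 ≤ ∑ i ∈ Finset.range k, d i + d k := by
      have := hd (k+1) le_rfl
      rwa [Finset.sum_range_succ] at this
    have h2 : g k * (∑ i ∈ Finset.range k, d i + d k) ≤ G * (∑ i ∈ Finset.range k, d i + d k) :=
      mul_le_mul_of_nonneg_right (hG k (by omega)) hP
    nlinarith [h1, h2]

/-- Karamata-type inequality for `t log t`. -/
lemma karamata_entropy (k : ℕ) (a b : ℕ → ℝ)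
    (ha : ∀ i, i < k → 0 < a i) (hb : ∀ i, i < k → 0 < b i)
    (hbs : ∀ i j, i ≤ j → j < k → b i ≤ b j)
    (hps : ∀ j, j ≤ k → ∑ i ∈ Finset.range j, a i ≤ ∑ i ∈ Finset.range j, b i)
    (htot : ∑ i ∈ Finset.range k, a i = ∑ i ∈ Finset.range k, b i) :
    ∑ i ∈ Finset.range k, b i * Real.log (b i)
      ≤ ∑ i ∈ Finset.range k, a i * Real.log (a i) := by
  rcases Nat.eq_zero_or_pos k with rfl | hk
  · simp
  set g : ℕ → ℝ := fun i => Real.log (b i) + 1 with hgdef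
  set d : ℕ → ℝ := fun i => b i - a i with hddef
  have hpt : ∀ i, i < k → b i * Real.log (b i) - a i * Real.log (a i) ≤ g i * d i := by
    intro i hi
    have hai := ha i hi; have hbi := hb i hi
    have h1 : Real.log (b i / a i) ≤ b i / a i - 1 :=
      Real.log_le_sub_one_of_pos (by positivity)
    rw [Real.log_div (ne_of_gt hbi) (ne_of_gt hai)] at h1
    have h2 : a i * (Real.log (b i) - Real.log (a i)) ≤ a i * (b i / a i - 1) :=
      mul_le_mul_of_nonneg_left h1 hai.le
    have h3 : a i * (b i / a i - 1) = b i - a i := by field_simp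
    simp only [hgdef, hddef]
    nlinarith [h2, h3]
  have hgmono : ∀ i j, i ≤ j → j < k → g i ≤ g j := by
    intro i j hij hj
    simp only [hgdef]
    have := Real.log_le_log (hb i (lt_of_le_of_lt hij hj)) (hbs i j hij hj)
    linarith
  have hdps : ∀ j, j ≤ k → 0 ≤ ∑ i ∈ Finset.range j, d i := by
    intro j hj
    simp only [hddef]
    rw [Finset.sum_sub_distrib]
    linarith [hps j hj]
  have habel := abel_bound k g d hgmono hdps (g (k-1))
    (fun i hi => hgmono i (k-1) (by omega) (by omega))
  have hd0 : ∑ i ∈ Finset.range k, d i = 0 := by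
    simp only [hddef]; rw [Finset.sum_sub_distrib]; linarith
  rw [hd0, mul_zero] at habel
  have h4 : ∑ i ∈ Finset.range k, (b i * Real.log (b i) - a i * Real.log (a i))
      ≤ ∑ i ∈ Finset.range k, g i * d i :=
    Finset.sum_le_sum (fun i hi => hpt i (Finset.mem_range.mp hi))
  rw [Finset.sum_sub_distrib] at h4
  linarith

lemma le_of_strictMono_fin {j n : ℕ} (f : Fin j → Fin n) (hf : StrictMono f) :
    ∀ i : Fin j, (i : ℕ) ≤ (f i : ℕ) := by
  intro ⟨i, hi⟩
  induction i with
  | zero => simp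
  | succ m ih =>
    have hm : m < j := by omega
    have h1 := ih hm
    have h2 : f ⟨m, hm⟩ < f ⟨m+1, hi⟩ := hf (by simp [Fin.lt_def])
    rw [Fin.lt_def] at h2
    simp only [Fin.val_mk] at h1 h2 ⊢
    omega

lemma sum_smallest_le {n j : ℕ} (w : Fin n → ℝ)
    (hmono : ∀ x y : Fin n, x ≤ y → w x ≤ w y)
    (hj : j ≤ n) (T : Finset (Fin n)) (hT : T.card = j) :
    ∑ i : Fin j, w (Fin.castLE hj i) ≤ ∑ x ∈ T, w x := by
  have himg : Finset.image (T.orderEmbOfFin hT) Finset.univ = T := by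
    apply Finset.coe_injective
    rw [Finset.coe_image, Finset.coe_univ, Set.image_univ, Finset.range_orderEmbOfFin]
  rw [← himg, Finset.sum_image (fun a _ b _ h => (T.orderEmbOfFin hT).injective h)]
  apply Finset.sum_le_sum
  intro i _
  apply hmono
  rw [Fin.le_def]
  simpa using le_of_strictMono_fin _ (T.orderEmbOfFin hT).strictMono i

lemma orbMass_pos_s17 {n k : ℕ} (w : Fin n → ℝ) (hw : ∀ x, 0 < w x) (p : Fin n → Fin k)
    {i : Fin k} (hx : ∃ x, p x = i) : 0 < orbMass w p i := by
  obtain ⟨x, hx⟩ := hx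
  exact Finset.sum_pos (fun y _ => hw y) ⟨x, by simp [hx]⟩

lemma sum_orbMass {n k : ℕ} (w : Fin n → ℝ) (p : Fin n → Fin k) :
    ∑ i : Fin k, orbMass w p i = ∑ x, w x := by
  simpa [orbMass] using Finset.sum_fiberwise Finset.univ p w

/-- Sum of orbit masses over a set of `j` blocks dominates the sum of the `j` smallest
weights. -/
lemma sum_smallest_le_blocks {n k : ℕ} (w : Fin n → ℝ) (hw : ∀ x, 0 < w x)
    (hmono : ∀ x y : Fin n, x ≤ y → w x ≤ w y)
    (p : Fin n → Fin k) (hs : Function.Surjective p)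
    (S : Finset (Fin k)) {j : ℕ} (hS : S.card = j) (hjn : j ≤ n) :
    ∑ i : Fin j, w (Fin.castLE hjn i) ≤ ∑ i ∈ S, orbMass w p i := by
  classical
  have hne : ∀ i : Fin k, (Finset.univ.filter fun x => p x = i).Nonempty := by
    intro i; obtain ⟨x, hx⟩ := hs i; exact ⟨x, by simp [hx]⟩
  set mi : Fin k → Fin n := fun i => (Finset.univ.filter fun x => p x = i).min' (hne i)
    with hmi
  have hmem : ∀ i, p (mi i) = i := by
    intro i
    have := Finset.min'_mem (Finset.univ.filter fun x => p x = i) (hne i)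
    simpa using this
  have hinj : ∀ a ∈ S, ∀ b ∈ S, mi a = mi b → a = b := by
    intro a _ b _ h
    rw [← hmem a, ← hmem b, h]
  have hcard : (S.image mi).card = j := by
    rw [Finset.card_image_of_injOn (fun a ha b hb h => hinj a ha b hb h), hS]
  calc ∑ i : Fin j, w (Fin.castLE hjn i)
      ≤ ∑ x ∈ S.image mi, w x := sum_smallest_le w hmono hjn _ hcard
    _ = ∑ i ∈ S, w (mi i) := Finset.sum_image hinj
    _ ≤ ∑ i ∈ S, orbMass w p i := by
        apply Finset.sum_le_sum
        intro i _
        exact Finset.single_le_sum (f := w) (fun y _ => (hw y).le)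
          (by simp [hmem i])

/-- The KL divergence of a Gibbs kernel to `Π` is minus the entropy of the block masses. -/
lemma klDiv_gibbs_eq {n k : ℕ} (w : Fin n → ℝ) (hw : ∀ x, 0 < w x) (p : Fin n → Fin k) :
    klDiv w (gibbsKer w p) (Matrix.of fun _ y => w y)
      = - ∑ i : Fin k, orbMass w p i * Real.log (orbMass w p i) := by
  classical
  have hm : ∀ x : Fin n, 0 < orbMass w p (p x) := fun x =>
    orbMass_pos_s17 w hw p ⟨x, rfl⟩
  unfold klDiv
  have hx : ∀ x : Fin n,
      ∑ y, w x * gibbsKer w p x y *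
        Real.log (gibbsKer w p x y / Matrix.of (fun _ y => w y) x y)
      = -(w x * Real.log (orbMass w p (p x))) := by
    intro x
    have hm0 : orbMass w p (p x) ≠ 0 := ne_of_gt (hm x)
    have hterm : ∀ y : Fin n,
        w x * gibbsKer w p x y *
          Real.log (gibbsKer w p x y / Matrix.of (fun _ y => w y) x y)
        = if p y = p x then w y / orbMass w p (p x) * -(w x * Real.log (orbMass w p (p x))) else 0 := by
      intro y
      simp only [gibbsKer, Matrix.of_apply]
      split_ifs with h
      · have hy0 : w y ≠ 0 := ne_of_gt (hw y)
        have h1 : w y / orbMass w p (p x) / w y = 1 / orbMass w p (p x) := by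
          rw [div_div, mul_comm, ← div_div, div_self hy0]
        rw [h1, one_div, Real.log_inv]
        ring
      · simp
    rw [Finset.sum_congr rfl (fun y _ => hterm y)]
    rw [← Finset.sum_filter]
    rw [← Finset.sum_mul, ← Finset.sum_div]
    have : ∑ y ∈ Finset.univ.filter (fun y => p y = p x), w y = orbMass w p (p x) := rfl
    rw [this, div_self hm0, one_mul]
  rw [Finset.sum_congr rfl (fun x _ => hx x)]
  have key : ∑ x, w x * Real.log (orbMass w p (p x))
      = ∑ i : Fin k, orbMass w p i * Real.log (orbMass w p i) := by
    rw [← Finset.sum_fiberwise Finset.univ p (fun x => w x * Real.log (orbMass w p (p x)))]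
    apply Finset.sum_congr rfl
    intro i _
    have : ∀ x ∈ Finset.univ.filter (fun x => p x = i),
        w x * Real.log (orbMass w p (p x)) = w x * Real.log (orbMass w p i) := by
      intro x hx
      rw [(Finset.mem_filter.mp hx).2]
    rw [Finset.sum_congr rfl this, ← Finset.sum_mul]
    rfl
  rw [Finset.sum_neg_distrib, key]

/-- if `π` is non-decreasing, the partition into the `k − 1` singletons
of smallest mass and one block grouping the rest (encoded by the labelling map
`pO x = min x (k−1)`, 0-indexed) minimises `D^π(G‖Π)` among all Gibbs kernels coming
from partitions of the state space into exactly `k` nonempty blocks. -/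
theorem stmt17 {n k : ℕ} (hn : 0 < n) (hk : 0 < k) (hkn : k ≤ n)
    (π : Fin n → ℝ) (hπpos : ∀ x, 0 < π x) (hπsum : ∑ x, π x = 1)
    (hmono : ∀ x y : Fin n, x ≤ y → π x ≤ π y)
    (pO : Fin n → Fin k) (hpO : ∀ x : Fin n, (pO x : ℕ) = min (x : ℕ) (k - 1)) :
    ∀ pC : Fin n → Fin k, Function.Surjective pC →
      klDiv π (gibbsKer π pO) (Matrix.of fun _ y => π y)
        ≤ klDiv π (gibbsKer π pC) (Matrix.of fun _ y => π y) := by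
  intro pC hsurj
  classical
  have hpOsurj : Function.Surjective pO := by
    intro i
    refine ⟨⟨(i : ℕ), lt_of_lt_of_le i.2 hkn⟩, ?_⟩
    apply Fin.ext
    rw [hpO]
    simp only [Fin.val_mk]
    omega
  set M : Fin k → ℝ := fun i => orbMass π pC i with hM
  set σ := Tuple.sort M with hσ
  set a : ℕ → ℝ := fun i => if h : i < k then orbMass π pO ⟨i, h⟩ else 1 with ha
  set b : ℕ → ℝ := fun i => if h : i < k then M (σ ⟨i, h⟩) else 1 with hb
  have hApos : ∀ i : Fin k, 0 < orbMass π pO i := fun i =>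
    orbMass_pos_s17 π hπpos pO (hpOsurj i)
  have hMpos : ∀ i : Fin k, 0 < M i := fun i =>
    orbMass_pos_s17 π hπpos pC (hsurj i)
  -- fibers of pO below k-1 are singletons
  have hOfiber : ∀ i : Fin k, (i : ℕ) < k - 1 →
      orbMass π pO i = π ⟨(i : ℕ), lt_of_lt_of_le i.2 hkn⟩ := by
    intro i hi
    have hfe : Finset.univ.filter (fun z => pO z = i)
        = {(⟨(i : ℕ), lt_of_lt_of_le i.2 hkn⟩ : Fin n)} := by
      ext x
      simp only [Finset.mem_filter, Finset.mem_univ, true_and, Finset.mem_singleton,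
        Fin.ext_iff, Fin.val_mk]
      rw [hpO x]
      omega
    rw [orbMass, hfe, Finset.sum_singleton]
  -- sums over ranges as Fin sums
  have hb_sum : ∀ j : ℕ, ∀ hj : j ≤ k, ∑ i ∈ Finset.range j, b i
      = ∑ t : Fin j, M (σ (Fin.castLE hj t)) := by
    intro j hj
    rw [← Fin.sum_univ_eq_sum_range]
    apply Finset.sum_congr rfl
    intro t _
    have ht : (t : ℕ) < k := lt_of_lt_of_le t.2 hj
    simp only [hb]
    rw [dif_pos ht]
    rfl
  have ha_sum : ∀ j : ℕ, ∀ hj : j ≤ k, ∑ i ∈ Finset.range j, a i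
      = ∑ t : Fin j, orbMass π pO (Fin.castLE hj t) := by
    intro j hj
    rw [← Fin.sum_univ_eq_sum_range]
    apply Finset.sum_congr rfl
    intro t _
    have ht : (t : ℕ) < k := lt_of_lt_of_le t.2 hj
    simp only [ha]
    rw [dif_pos ht]
    rfl
  have htot : ∑ i ∈ Finset.range k, a i = ∑ i ∈ Finset.range k, b i := by
    rw [ha_sum k le_rfl, hb_sum k le_rfl]
    have h1 : ∑ t : Fin k, orbMass π pO (Fin.castLE le_rfl t)
        = ∑ t : Fin k, orbMass π pO t := by
      apply Finset.sum_congr rfl; intro t _; congr 1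
    have h2 : ∑ t : Fin k, M (σ (Fin.castLE le_rfl t)) = ∑ t : Fin k, M (σ t) := by
      apply Finset.sum_congr rfl; intro t _; congr 1
    rw [h1, h2, Equiv.sum_comp σ M, sum_orbMass]
    simp only [hM]
    rw [sum_orbMass]
  have hps : ∀ j : ℕ, j ≤ k → ∑ i ∈ Finset.range j, a i ≤ ∑ i ∈ Finset.range j, b i := by
    intro j hj
    rcases eq_or_lt_of_le hj with rfl | hjk
    · exact le_of_eq htot
    · have hjn : j ≤ n := le_trans (le_of_lt hjk) hkn
      -- LHS equals sum of the j smallest weights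
      have hLHS : ∑ i ∈ Finset.range j, a i = ∑ t : Fin j, π (Fin.castLE hjn t) := by
        rw [ha_sum j hj]
        apply Finset.sum_congr rfl
        intro t _
        have htk1 : ((Fin.castLE hj t : Fin k) : ℕ) < k - 1 := by
          have := t.2; simp only [Fin.coe_castLE]; omega
        rw [hOfiber _ htk1]
        congr 1
      -- RHS is a sum of orbMass over a set of j blocks
      set S : Finset (Fin k) := Finset.image (fun t : Fin j => σ (Fin.castLE hj t)) Finset.univ
        with hS
      have hSinj : Function.Injective (fun t : Fin j => σ (Fin.castLE hj t)) := by
        intro s t h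
        have := σ.injective h
        exact Fin.castLE_injective hj this
      have hScard : S.card = j := by
        rw [hS, Finset.card_image_of_injective _ hSinj, Finset.card_univ, Fintype.card_fin]
      have hRHS : ∑ i ∈ Finset.range j, b i = ∑ i ∈ S, M i := by
        rw [hb_sum j hj, hS, Finset.sum_image (fun s _ t _ h => hSinj h)]
      rw [hLHS, hRHS]
      exact sum_smallest_le_blocks π hπpos hmono pC hsurj S hScard hjn
  have hbs : ∀ i j : ℕ, i ≤ j → j < k → b i ≤ b j := by
    intro i j hij hj
    have hi : i < k := lt_of_le_of_lt hij hj
    simp only [hb]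
    rw [dif_pos hi, dif_pos hj]
    exact Tuple.monotone_sort M (show (⟨i, hi⟩ : Fin k) ≤ ⟨j, hj⟩ from by
      rw [Fin.le_def]; exact hij)
  have hapos : ∀ i, i < k → 0 < a i := by
    intro i hi; simp only [ha]; rw [dif_pos hi]; exact hApos _
  have hbpos : ∀ i, i < k → 0 < b i := by
    intro i hi; simp only [hb]; rw [dif_pos hi]; exact hMpos _
  have hkar := karamata_entropy k a b hapos hbpos hbs hps htot
  -- convert Karamata conclusion to Fin sums
  have hconvb : ∑ i ∈ Finset.range k, b i * Real.log (b i)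
      = ∑ i : Fin k, M i * Real.log (M i) := by
    rw [← Fin.sum_univ_eq_sum_range (fun i => b i * Real.log (b i)) k]
    rw [← Equiv.sum_comp σ (fun i => M i * Real.log (M i))]
    apply Finset.sum_congr rfl
    intro t _
    simp only [hb]
    rw [dif_pos t.2]
  have hconva : ∑ i ∈ Finset.range k, a i * Real.log (a i)
      = ∑ i : Fin k, orbMass π pO i * Real.log (orbMass π pO i) := by
    rw [← Fin.sum_univ_eq_sum_range (fun i => a i * Real.log (a i)) k]
    apply Finset.sum_congr rfl
    intro t _
    simp only [ha]
    rw [dif_pos t.2]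
  rw [klDiv_gibbs_eq π hπpos pO, klDiv_gibbs_eq π hπpos pC]
  apply neg_le_neg
  rw [hconvb, hconva] at hkar
  exact hkar
end

section
/- Let n = m·k with m, k positive integers such that m divides k, and let π be the uniform distribution on X = {1,…,n}. Define two partitions of X: O_i := {(i−1)k+1, …, ik} for i ∈ {1,…,m}, and C_j := {j, j+m, j+2m, …, j+(k−1)m} for j ∈ {1,…,m}. Let G₁ and G₂ be the Gibbs orbit kernels associated with the partitions (O_i) and (C_j) respectively. Then G₁·G₂ = Π; that is, (G₁G₂)(x,y) = 1/n for all x, y ∈ X, so the product of the two Gibbs orbit kernels is an exact sampler of the uniform distribution. -/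
/-!
Writing `x = a k + t` with `a < m`, `t < k` identifies `Fin (m k)` with `Fin m × Fin k`. The
block of `x` is `a` and, because `m ∣ k`, its residue class mod `m` is that of `t`; so under the
uniform (product) distribution the two partitions are independent. For independent partitions
`(G₁G₂)(x,y) = π(O(x) ∩ C(y)) π(y) / (π(O(x)) π(C(y))) = π(y)`.
-/

open Matrix Finset

section GibbsProduct

variable {n a b : ℕ} (π : Fin n → ℝ) (p : Fin n → Fin a) (q : Fin n → Fin b)

def IndepPartitions : Prop :=
  ∀ i j, ∑ z with p z = i ∧ q z = j, π z = orbMass π p i * orbMass π q j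

lemma gibbsKer_mul_gibbsKer_apply (x y : Fin n) :
    (gibbsKer π p * gibbsKer π q) x y =
      (∑ z with p z = p x ∧ q z = q y, π z) * π y / (orbMass π p (p x) * orbMass π q (q y)) :=
  calc (gibbsKer π p * gibbsKer π q) x y
      = ∑ z, if p z = p x ∧ q z = q y
          then π z / orbMass π p (p x) * (π y / orbMass π q (q y)) else 0 := by
        rw [mul_apply]
        refine sum_congr rfl fun z _ => ?_
        simp only [gibbsKer, of_apply]
        split_ifs <;> simp_all
    _ = _ := by rw [← sum_filter, ← sum_mul, ← sum_div]; ring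

lemma orbMass_apply_self_pos (hπ : ∀ x, 0 < π x) (x : Fin n) : 0 < orbMass π p (p x) :=
  sum_pos (fun z _ => hπ z) ⟨x, by simp⟩

theorem gibbsKer_mul_gibbsKer_apply_of_indepPartitions (hπ : ∀ x, 0 < π x)
    (hpq : IndepPartitions π p q) (x y : Fin n) :
    (gibbsKer π p * gibbsKer π q) x y = π y := by
  have hp := (orbMass_apply_self_pos π p hπ x).ne'
  have hq := (orbMass_apply_self_pos π q hπ y).ne'
  rw [gibbsKer_mul_gibbsKer_apply, hpq]
  field_simp

end GibbsProduct

lemma card_filter_fst_and_snd {γ α β : Type*} [Fintype γ] [Fintype α] [Fintype β]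
    (e : γ ≃ α × β) (P : α → Prop) (Q : β → Prop) [DecidablePred P] [DecidablePred Q] :
    #{z | P (e z).1 ∧ Q (e z).2} = #{x | P x} * #{y | Q y} := by
  rw [← card_product, ← filter_product, univ_product_univ]
  exact card_equiv e (by simp)

lemma indepPartitions_uniform_of_equiv_prod {n a b : ℕ} {α β : Type*} [Fintype α] [Fintype β]
    (p : Fin n → Fin a) (q : Fin n → Fin b) (e : Fin n ≃ α × β) (f : α → Fin a) (g : β → Fin b)
    (hp : ∀ z, p z = f (e z).1) (hq : ∀ z, q z = g (e z).2) :
    IndepPartitions (fun _ => 1 / (n : ℝ)) p q := by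
  intro i j
  obtain rfl | hn := eq_or_ne n 0
  · simp [orbMass]
  have hcard : n = Fintype.card α * Fintype.card β := by
    rw [← Fintype.card_prod, ← Fintype.card_congr e, Fintype.card_fin]
  have hα : Fintype.card α ≠ 0 := fun h => hn (by simp [hcard, h])
  have hβ : Fintype.card β ≠ 0 := fun h => hn (by simp [hcard, h])
  have hJ := card_filter_fst_and_snd e (f · = i) (g · = j)
  have hO := card_filter_fst_and_snd e (f · = i) fun _ => True
  have hC := card_filter_fst_and_snd e (fun _ => True) (g · = j)
  simp only [and_true, true_and, filter_true, card_univ] at hO hC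
  simp only [orbMass, sum_const, nsmul_eq_mul, hp, hq, hJ, hO, hC, hcard]
  push_cast
  field_simp

/-- with `n = m·k`, `m ∣ k`, `π` uniform, the partition into `m`
consecutive blocks of size `k` (labelled by `pO x = x / k`, 0-indexed) and the
partition into the `m` residue classes mod `m` (labelled by `pC x = x % m`), the
product of the two Gibbs orbit kernels is the exact sampler `Π` of the uniform
distribution: `(G₁G₂)(x,y) = 1/n` for all `x, y`. -/
theorem stmt19 {n m k : ℕ} (hm : 0 < m) (hk : 0 < k) (hn : n = m * k) (hmk : m ∣ k)
    (π : Fin n → ℝ) (hπ : ∀ x, π x = 1 / (n : ℝ))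
    (pO : Fin n → Fin m) (hpO : ∀ x : Fin n, (pO x : ℕ) = (x : ℕ) / k)
    (pC : Fin n → Fin m) (hpC : ∀ x : Fin n, (pC x : ℕ) = (x : ℕ) % m) :
    ∀ x y : Fin n, (gibbsKer π pO * gibbsKer π pC) x y = 1 / (n : ℝ) := by
  subst hn
  obtain rfl : π = fun _ => 1 / ((m * k : ℕ) : ℝ) := funext hπ
  have hindep : IndepPartitions (fun _ => 1 / ((m * k : ℕ) : ℝ)) pO pC :=
    indepPartitions_uniform_of_equiv_prod pO pC finProdFinEquiv.symm id
      (fun t => ⟨t % m, Nat.mod_lt _ hm⟩) (fun z => Fin.ext (by simp [hpO]))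
      (fun z => Fin.ext (by simp [hpC, Nat.mod_mod_of_dvd _ hmk]))
  exact gibbsKer_mul_gibbsKer_apply_of_indepPartitions _ _ _ (fun _ => by positivity) hindep
end
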